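/- arXiv:2110.02910 — 3 statements merged into one kernel-verified Lean document; each statement's English description precedes it below -/
import Mathlib

section
/- For n ≥ 7 and k ∈ [3, n/2 − 1], the graph CSL(n, 2) with vertex 0 deleted and the graph CSL(n, k) with vertex 0 deleted are not isomorphic. -/
/-- The circulant skip-link graph on `ZMod n`: `i` is adjacent to `i ± 1` and `i ± k`. -/
def CSL (n k : ℕ) : SimpleGraph (ZMod n) :=
  SimpleGraph.fromRel (fun i j => j = i + 1 ∨ j = i + (k : ZMod n))

lemma CSL_adj (n k : ℕ) (i j : ZMod n) :
    (CSL n k).Adj i j ↔ i ≠ j ∧ (j = i + 1 ∨ j = i + k ∨ i = j + 1 ∨ i = j + k) := by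
  simp [CSL, SimpleGraph.fromRel_adj]; tauto

instance instCSLDec (n k : ℕ) : DecidableRel (CSL n k).Adj := fun a b =>
  decidable_of_iff _ (CSL_adj n k a b).symm

instance instCSLIDec (n k : ℕ) : DecidableRel ((CSL n k).induce {v | v ≠ 0}).Adj := fun a b =>
  inferInstanceAs (Decidable ((CSL n k).Adj a b))

lemma zmod_cast_ne {n : ℕ} {a b : ℕ} (ha : a < n) (hb : b < n) (hne : a ≠ b) :
    (a : ZMod n) ≠ b := fun H => hne (by
  rw [← ZMod.val_cast_of_lt ha, ← ZMod.val_cast_of_lt hb, H])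

lemma zmod_cast_ne_zero {n a : ℕ} (ha : 0 < a) (h2 : a < n) : (a : ZMod n) ≠ 0 := by
  have := zmod_cast_ne (n := n) (b := 0) h2 (by omega) (by omega)
  simpa using this

lemma zmod_neg_cast {n : ℕ} (a : ℕ) (ha : a ≤ n) : -(a : ZMod n) = ((n - a : ℕ) : ZMod n) := by
  have h : ((n - a : ℕ) : ZMod n) + (a : ZMod n) = ((n - a + a : ℕ) : ZMod n) := by push_cast; ring
  rw [Nat.sub_add_cancel ha] at h
  simp at h
  exact (eq_neg_of_add_eq_zero_left h).symm

lemma degree_induce_eq_card {n : ℕ} [NeZero n] (G : SimpleGraph (ZMod n)) [DecidableRel G.Adj]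
    [DecidableRel (G.induce {v | v ≠ 0}).Adj] (v : ZMod n) (hv : v ≠ 0) :
    (G.induce {v | v ≠ 0}).degree ⟨v, hv⟩ =
      (Finset.univ.filter (fun w : ZMod n => w ≠ 0 ∧ G.Adj v w)).card := by
  rw [SimpleGraph.degree]
  apply Finset.card_bij (fun (w : {v : ZMod n | v ≠ 0}) _ => (w : ZMod n))
  · intro a ha
    rw [SimpleGraph.mem_neighborFinset] at ha
    simp only [Finset.mem_filter, Finset.mem_univ, true_and]
    exact ⟨a.2, ha⟩
  · intro a _ b _ h
    exact Subtype.ext h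
  · intro b hb
    simp only [Finset.mem_filter, Finset.mem_univ, true_and] at hb
    exact ⟨⟨b, hb.1⟩, (SimpleGraph.mem_neighborFinset _ _ _).mpr hb.2, rfl⟩

lemma iso_degree {V W : Type*} [Fintype V] [Fintype W] {G : SimpleGraph V} {G' : SimpleGraph W}
    [DecidableRel G.Adj] [DecidableRel G'.Adj] (e : G ≃g G') (v : V) :
    G'.degree (e v) = G.degree v := by
  rw [← SimpleGraph.card_neighborSet_eq_degree, ← SimpleGraph.card_neighborSet_eq_degree]
  exact Fintype.card_congr (e.mapNeighborSet v).symm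

lemma filter_card_3 {α : Type*} [DecidableEq α] (z a b c : α) (ha : a ≠ z) (hb : b ≠ z)
    (hc : c ≠ z) (hab : a ≠ b) (hac : a ≠ c) (hbc : b ≠ c) :
    (({z, a, b, c} : Finset α).filter (· ≠ z)).card = 3 := by
  rw [Finset.filter_insert, if_neg (by simp), Finset.filter_insert, if_pos ha,
    Finset.filter_insert, if_pos hb, Finset.filter_singleton, if_pos hc,
    Finset.card_insert_of_notMem (by simp [hab, hac]),
    Finset.card_insert_of_notMem (by simp [hbc]), Finset.card_singleton]

lemma filter_card_4 {α : Type*} [DecidableEq α] (z a b c d : α) (ha : a ≠ z) (hb : b ≠ z)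
    (hc : c ≠ z) (hd : d ≠ z) (hab : a ≠ b) (hac : a ≠ c) (had : a ≠ d) (hbc : b ≠ c)
    (hbd : b ≠ d) (hcd : c ≠ d) :
    (({a, b, c, d} : Finset α).filter (· ≠ z)).card = 4 := by
  rw [Finset.filter_insert, if_pos ha, Finset.filter_insert, if_pos hb,
    Finset.filter_insert, if_pos hc, Finset.filter_singleton, if_pos hd,
    Finset.card_insert_of_notMem (by simp [hab, hac, had]),
    Finset.card_insert_of_notMem (by simp [hbc, hbd]),
    Finset.card_insert_of_notMem (by simp [hcd]), Finset.card_singleton]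

lemma CSL_deg {n k : ℕ} [NeZero n] (hn : 7 ≤ n) (hk : 2 ≤ k) (hk2 : 2 * k ≤ n - 2)
    (v : ZMod n) (hv : v ≠ 0) :
    ((CSL n k).induce {v | v ≠ 0}).degree ⟨v, hv⟩ =
      if v = 1 ∨ v = (k : ZMod n) ∨ v = -1 ∨ v = -(k : ZMod n) then 3 else 4 := by
  have e1 : (1 : ZMod n) = ((1 : ℕ) : ZMod n) := by norm_num
  have e2 : (2 : ZMod n) = ((2 : ℕ) : ZMod n) := by norm_num
  have en1 : (-1 : ZMod n) = ((n - 1 : ℕ) : ZMod n) := by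
    rw [e1, zmod_neg_cast 1 (by omega)]
  have A : (1 : ZMod n) ≠ 0 := by rw [e1]; exact zmod_cast_ne_zero (by omega) (by omega)
  have B : (2 : ZMod n) ≠ 0 := by rw [e2]; exact zmod_cast_ne_zero (by omega) (by omega)
  have C : (k : ZMod n) ≠ 0 := zmod_cast_ne_zero (by omega) (by omega)
  have D : (k : ZMod n) ≠ 1 := by rw [e1]; exact zmod_cast_ne (by omega) (by omega) (by omega)
  have E : (k : ZMod n) ≠ -1 := by
    rw [en1]; exact zmod_cast_ne (by omega) (by omega) (by omega)
  have F : (k : ZMod n) + k ≠ 0 := by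
    have h : (k : ZMod n) + k = ((k + k : ℕ) : ZMod n) := by push_cast; ring
    rw [h]; exact zmod_cast_ne_zero (by omega) (by omega)
  rw [degree_induce_eq_card _ v hv]
  have hset : Finset.univ.filter (fun w : ZMod n => w ≠ 0 ∧ (CSL n k).Adj v w)
      = ({v + 1, v + k, v - 1, v - k} : Finset (ZMod n)).filter (· ≠ 0) := by
    ext w
    simp only [Finset.mem_filter, Finset.mem_univ, true_and, Finset.mem_insert,
      Finset.mem_singleton, CSL_adj]
    constructor
    · rintro ⟨hw0, _, h | h | h | h⟩
      · exact ⟨Or.inl h, hw0⟩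
      · exact ⟨Or.inr (Or.inl h), hw0⟩
      · exact ⟨Or.inr (Or.inr (Or.inl (by linear_combination -h))), hw0⟩
      · exact ⟨Or.inr (Or.inr (Or.inr (by linear_combination -h))), hw0⟩
    · rintro ⟨h | h | h | h, hw0⟩
      · exact ⟨hw0, fun hvw => A (by linear_combination -h - hvw), Or.inl h⟩
      · exact ⟨hw0, fun hvw => C (by linear_combination -h - hvw), Or.inr (Or.inl h)⟩
      · exact ⟨hw0, fun hvw => A (by linear_combination h + hvw),
          Or.inr (Or.inr (Or.inl (by linear_combination -h)))⟩
      · exact ⟨hw0, fun hvw => C (by linear_combination h + hvw),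
          Or.inr (Or.inr (Or.inr (by linear_combination -h)))⟩
  rw [hset]
  split_ifs with hcase
  · rcases hcase with rfl | rfl | rfl | rfl
    · -- v = 1 : set {2, 1+k, 0, 1-k}
      rw [show ({(1 : ZMod n) + 1, 1 + (k : ZMod n), (1 : ZMod n) - 1, 1 - (k : ZMod n)} : Finset (ZMod n))
          = {0, 1 + 1, 1 + (k : ZMod n), 1 - (k : ZMod n)} by rw [sub_self]; ext x; simp; tauto]
      exact filter_card_3 _ _ _ _
        (fun h => B (by linear_combination h))
        (fun h => E (by linear_combination h))
        (fun h => D (by linear_combination -h))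
        (fun h => D (by linear_combination -h))
        (fun h => E (by linear_combination h))
        (fun h => F (by linear_combination h))
    · -- v = k : set {k+1, k+k, k-1, 0}
      rw [show ({(k : ZMod n) + 1, (k : ZMod n) + k, (k : ZMod n) - 1, (k : ZMod n) - k} : Finset (ZMod n))
          = {0, (k : ZMod n) + 1, (k : ZMod n) + k, (k : ZMod n) - 1} by rw [sub_self]; ext x; simp; tauto]
      exact filter_card_3 _ _ _ _
        (fun h => E (by linear_combination h))
        F
        (fun h => D (by linear_combination h))
        (fun h => D (by linear_combination -h))
        (fun h => B (by linear_combination h))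
        (fun h => E (by linear_combination h))
    · -- v = -1 : set {0, -1+k, -2, -1-k}
      rw [show ({(-1 : ZMod n) + 1, -1 + (k : ZMod n), (-1 : ZMod n) - 1, -1 - (k : ZMod n)} : Finset (ZMod n))
          = {0, -1 + (k : ZMod n), -1 - 1, -1 - (k : ZMod n)} by rw [neg_add_cancel]]
      exact filter_card_3 _ _ _ _
        (fun h => D (by linear_combination h))
        (fun h => B (by linear_combination -h))
        (fun h => E (by linear_combination -h))
        (fun h => E (by linear_combination h))
        (fun h => F (by linear_combination h))
        (fun h => D (by linear_combination h))
    · -- v = -k : set {1-k, 0, -k-1, -k-k}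
      rw [show ({(-(k : ZMod n)) + 1, -(k : ZMod n) + k, -(k : ZMod n) - 1, -(k : ZMod n) - k} : Finset (ZMod n))
          = {0, -(k : ZMod n) + 1, -(k : ZMod n) - 1, -(k : ZMod n) - k} by rw [neg_add_cancel]; ext x; simp; tauto]
      exact filter_card_3 _ _ _ _
        (fun h => D (by linear_combination -h))
        (fun h => E (by linear_combination -h))
        (fun h => F (by linear_combination -h))
        (fun h => B (by linear_combination h))
        (fun h => E (by linear_combination h))
        (fun h => D (by linear_combination h))
  · push_neg at hcase
    obtain ⟨h1, hkk, hm1, hmk⟩ := hcase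
    exact filter_card_4 _ _ _ _ _
      (fun h => hm1 (by linear_combination h))
      (fun h => hmk (by linear_combination h))
      (fun h => h1 (by linear_combination h))
      (fun h => hkk (by linear_combination h))
      (fun h => D (by linear_combination -h))
      (fun h => B (by linear_combination h))
      (fun h => E (by linear_combination h))
      (fun h => E (by linear_combination h))
      (fun h => F (by linear_combination h))
      (fun h => D (by linear_combination h))

theorem stmt10 (n k : ℕ) (hn : 7 ≤ n) (hk : 3 ≤ k) (hk2 : 2 * k ≤ n - 2) :
    IsEmpty ((CSL n 2).induce {v | v ≠ 0} ≃g (CSL n k).induce {v | v ≠ 0}) := by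
  haveI : NeZero n := ⟨by omega⟩
  constructor
  intro e
  have e1 : (1 : ZMod n) = ((1 : ℕ) : ZMod n) := by norm_num
  have e2 : (2 : ZMod n) = ((2 : ℕ) : ZMod n) := by norm_num
  have en1 : (-1 : ZMod n) = ((n - 1 : ℕ) : ZMod n) := by
    rw [e1, zmod_neg_cast 1 (by omega)]
  have en2 : (-((2 : ℕ) : ZMod n)) = ((n - 2 : ℕ) : ZMod n) := zmod_neg_cast 2 (by omega)
  have enk : (-(k : ZMod n)) = ((n - k : ℕ) : ZMod n) := zmod_neg_cast k (by omega)
  have e21 : (1 : ZMod n) + 1 = ((2 : ℕ) : ZMod n) := by push_cast; ring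
  have e1k : (1 : ZMod n) + (k : ZMod n) = ((1 + k : ℕ) : ZMod n) := by push_cast; ring
  have e1mk : (1 : ZMod n) - (k : ZMod n) = ((n + 1 - k : ℕ) : ZMod n) := by
    rw [Nat.cast_sub (by omega)]; push_cast; rw [ZMod.natCast_self]; ring
  have h1ne : (1 : ZMod n) ≠ 0 := by rw [e1]; exact zmod_cast_ne_zero (by omega) (by omega)
  set x : {v : ZMod n | v ≠ 0} := (⟨1, h1ne⟩ : {v : ZMod n | v ≠ 0}) with hxdef
  have hx3 : ((CSL n k).induce {v | v ≠ 0}).degree x = 3 := by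
    rw [hxdef, CSL_deg hn (by omega) hk2 1 h1ne, if_pos (Or.inl rfl)]
  rcases h : e.symm x with ⟨v, hv0⟩
  have hdegw : ((CSL n 2).induce {v | v ≠ 0}).degree ⟨v, hv0⟩ = 3 := by
    rw [← h, iso_degree e.symm x, hx3]
  have hcase : v = 1 ∨ v = ((2 : ℕ) : ZMod n) ∨ v = -1 ∨ v = -((2 : ℕ) : ZMod n) := by
    by_contra hc
    rw [CSL_deg hn (by norm_num) (by omega) v hv0, if_neg hc] at hdegw
    norm_num at hdegw
  have key : ∀ (u : ZMod n) (hu0 : u ≠ 0), (CSL n 2).Adj v u →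
      (u = 1 ∨ u = ((2 : ℕ) : ZMod n) ∨ u = -1 ∨ u = -((2 : ℕ) : ZMod n)) → False := by
    intro u hu0 hadj hcond
    have hdegu : ((CSL n 2).induce {v | v ≠ 0}).degree ⟨u, hu0⟩ = 3 := by
      rw [CSL_deg hn (by norm_num) (by omega) u hu0, if_pos hcond]
    have hadj' : ((CSL n 2).induce {v | v ≠ 0}).Adj ⟨v, hv0⟩ ⟨u, hu0⟩ := hadj
    have hadj2 : ((CSL n k).induce {v | v ≠ 0}).Adj (e ⟨v, hv0⟩) (e ⟨u, hu0⟩) :=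
      e.map_adj_iff.mpr hadj'
    have hx : e ⟨v, hv0⟩ = x := by rw [← h, e.apply_symm_apply]
    rw [hx] at hadj2
    rcases hy : e ⟨u, hu0⟩ with ⟨uy, huy0⟩
    rw [hy] at hadj2
    have hdeguy : ((CSL n k).induce {v | v ≠ 0}).degree ⟨uy, huy0⟩ = 3 := by
      rw [← hy, iso_degree e ⟨u, hu0⟩, hdegu]
    have hraw : (CSL n k).Adj 1 uy := hadj2
    rw [CSL_adj] at hraw
    obtain ⟨hne, hd⟩ := hraw
    have h4 : ((CSL n k).induce {v | v ≠ 0}).degree ⟨uy, huy0⟩ = 4 := by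
      rw [CSL_deg hn (by omega) hk2 uy huy0, if_neg ?_]
      rcases hd with h' | h' | h' | h'
      · subst h'
        rw [e21, en1, enk]
        rintro (hq | hq | hq | hq)
        · exact zmod_cast_ne (n := n) (a := 2) (b := 1) (by omega) (by omega) (by omega)
            (by rw [← e1]; exact hq)
        · exact zmod_cast_ne (n := n) (a := 2) (b := k) (by omega) (by omega) (by omega) hq
        · exact zmod_cast_ne (n := n) (a := 2) (b := n - 1) (by omega) (by omega) (by omega) hq
        · exact zmod_cast_ne (n := n) (a := 2) (b := n - k) (by omega) (by omega) (by omega) hq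
      · subst h'
        rw [e1k, en1, enk]
        rintro (hq | hq | hq | hq)
        · exact zmod_cast_ne (n := n) (a := 1 + k) (b := 1) (by omega) (by omega) (by omega)
            (by rw [← e1]; exact hq)
        · exact zmod_cast_ne (n := n) (a := 1 + k) (b := k) (by omega) (by omega) (by omega) hq
        · exact zmod_cast_ne (n := n) (a := 1 + k) (b := n - 1) (by omega) (by omega) (by omega) hq
        · exact zmod_cast_ne (n := n) (a := 1 + k) (b := n - k) (by omega) (by omega) (by omega) hq
      · exact absurd (by linear_combination -h' : uy = 0) huy0
      · have huy : uy = ((n + 1 - k : ℕ) : ZMod n) := by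
          rw [← e1mk]; linear_combination -h'
        subst huy
        rw [en1, enk]
        rintro (hq | hq | hq | hq)
        · exact zmod_cast_ne (n := n) (a := n + 1 - k) (b := 1) (by omega) (by omega) (by omega)
            (by rw [← e1]; exact hq)
        · exact zmod_cast_ne (n := n) (a := n + 1 - k) (b := k) (by omega) (by omega)
            (by omega) hq
        · exact zmod_cast_ne (n := n) (a := n + 1 - k) (b := n - 1) (by omega) (by omega)
            (by omega) hq
        · exact zmod_cast_ne (n := n) (a := n + 1 - k) (b := n - k) (by omega) (by omega)
            (by omega) hq
    rw [hdeguy] at h4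
    norm_num at h4
  rcases hcase with rfl | rfl | rfl | rfl
  · refine key ((2 : ℕ) : ZMod n) ?_ ?_ (Or.inr (Or.inl rfl))
    · exact zmod_cast_ne_zero (by omega) (by omega)
    · rw [CSL_adj]
      refine ⟨?_, Or.inl (by push_cast; ring)⟩
      rw [e1]; exact zmod_cast_ne (by omega) (by omega) (by omega)
  · refine key 1 h1ne ?_ (Or.inl rfl)
    · rw [CSL_adj]
      refine ⟨?_, Or.inr (Or.inr (Or.inl (by push_cast; ring)))⟩
      rw [e1]; exact zmod_cast_ne (by omega) (by omega) (by omega)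
  · refine key (-((2 : ℕ) : ZMod n)) ?_ ?_ (Or.inr (Or.inr (Or.inr rfl)))
    · rw [en2]; exact zmod_cast_ne_zero (by omega) (by omega)
    · rw [CSL_adj]
      refine ⟨?_, Or.inr (Or.inr (Or.inl (by push_cast; ring)))⟩
      rw [en1, en2]; exact zmod_cast_ne (by omega) (by omega) (by omega)
  · refine key (-1) ?_ ?_ (Or.inr (Or.inr (Or.inl rfl)))
    · rw [en1]; exact zmod_cast_ne_zero (by omega) (by omega)
    · rw [CSL_adj]
      refine ⟨?_, Or.inl (by push_cast; ring)⟩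
      rw [en1, en2]; exact zmod_cast_ne (by omega) (by omega) (by omega)
end

section
/- For n ≥ 7 and k ∈ [3, n/2 − 1], the depth-1 ego-network of vertex 0 in CSL(n, 2) is not isomorphic to the depth-1 ego-network of vertex 0 in CSL(n, k). -/
lemma csl_adj {n m : ℕ} {a b : ZMod n} :
    (CSL n m).Adj a b ↔ a ≠ b ∧ (b = a + 1 ∨ b = a + (m : ℕ) ∨ a = b + 1 ∨ a = b + (m : ℕ)) := by
  simp only [CSL, SimpleGraph.fromRel_adj]; tauto

lemma cast_ne (n m : ℕ) (h0 : 0 < m) (h1 : m < n) : ((m : ZMod n)) ≠ 0 := by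
  intro h
  rw [ZMod.natCast_eq_zero_iff] at h
  exact absurd (Nat.le_of_dvd h0 h) (by omega)

lemma two_neighbors {n : ℕ} (hn : 7 ≤ n) (v : ZMod n) (hv : v = 0 ∨ (CSL n 2).Adj 0 v) :
    ∃ a b : ZMod n, (a = 0 ∨ (CSL n 2).Adj 0 a) ∧ (b = 0 ∨ (CSL n 2).Adj 0 b) ∧ a ≠ b ∧
      (CSL n 2).Adj v a ∧ (CSL n 2).Adj v b := by
  have hc1 : (1 : ZMod n) ≠ 0 := by
    have := cast_ne n 1 (by omega) (by omega); simpa using this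
  have hc2 : (2 : ZMod n) ≠ 0 := by
    have := cast_ne n 2 (by omega) (by omega); simpa using this
  have hcast2 : ((2 : ℕ) : ZMod n) = 2 := by push_cast; ring
  have adj01 : (CSL n 2).Adj 0 1 := by
    rw [csl_adj, hcast2]
    exact ⟨fun h => hc1 h.symm, Or.inl (by ring)⟩
  have adj02 : (CSL n 2).Adj 0 2 := by
    rw [csl_adj, hcast2]
    exact ⟨fun h => hc2 h.symm, Or.inr (Or.inl (by ring))⟩
  have adj0m1 : (CSL n 2).Adj 0 (-1) := by
    rw [csl_adj, hcast2]
    exact ⟨fun h => hc1 (by linear_combination h), Or.inr (Or.inr (Or.inl (by ring)))⟩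
  have adj0m2 : (CSL n 2).Adj 0 (-2) := by
    rw [csl_adj, hcast2]
    exact ⟨fun h => hc2 (by linear_combination h), Or.inr (Or.inr (Or.inr (by ring)))⟩
  have adj12 : (CSL n 2).Adj 1 2 := by
    rw [csl_adj, hcast2]
    exact ⟨fun h => hc1 (by linear_combination -h), Or.inl (by ring)⟩
  have adjm1m2 : (CSL n 2).Adj (-1) (-2) := by
    rw [csl_adj, hcast2]
    exact ⟨fun h => hc1 (by linear_combination h), Or.inr (Or.inr (Or.inl (by ring)))⟩
  rcases hv with h0 | hadj
  · refine ⟨1, 2, Or.inr adj01, Or.inr adj02, fun h => hc1 (by linear_combination -h), ?_, ?_⟩ <;>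
      rw [h0] <;> assumption
  · rw [csl_adj, hcast2] at hadj
    obtain ⟨hne, h | h | h | h⟩ := hadj
    · -- v = 1
      have hv1 : v = 1 := by linear_combination h
      exact ⟨0, 2, Or.inl rfl, Or.inr adj02, fun h' => hc2 (by linear_combination -h'),
        by rw [hv1]; exact adj01.symm, by rw [hv1]; exact adj12⟩
    · -- v = 2
      have hv1 : v = 2 := by linear_combination h
      exact ⟨0, 1, Or.inl rfl, Or.inr adj01, fun h' => hc1 (by linear_combination -h'),
        by rw [hv1]; exact adj02.symm, by rw [hv1]; exact adj12.symm⟩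
    · -- v = -1
      have hv1 : v = -1 := by linear_combination -h
      exact ⟨0, -2, Or.inl rfl, Or.inr adj0m2, fun h' => hc2 (by linear_combination h'),
        by rw [hv1]; exact adj0m1.symm, by rw [hv1]; exact adjm1m2⟩
    · -- v = -2
      have hv1 : v = -2 := by linear_combination -h
      exact ⟨0, -1, Or.inl rfl, Or.inr adj0m1, fun h' => hc1 (by linear_combination h'),
        by rw [hv1]; exact adj0m2.symm, by rw [hv1]; exact adjm1m2.symm⟩

lemma star_center {n k : ℕ} (hn : 7 ≤ n) (hk : 3 ≤ k) (hk2 : 2 * k ≤ n - 2)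
    (x : ZMod n) (hx : x = 0 ∨ (CSL n k).Adj 0 x) (hadj : (CSL n k).Adj 1 x) : x = 0 := by
  have hkn : k ≤ n - 5 := by omega
  have hc1 : (1 : ZMod n) ≠ 0 := by
    have := cast_ne n 1 (by omega) (by omega); simpa using this
  have hc3 : (3 : ZMod n) ≠ 0 := by
    have := cast_ne n 3 (by omega) (by omega); simpa using this
  have hck : (k : ZMod n) ≠ 0 := cast_ne n k (by omega) (by omega)
  have hckm2 : (k : ZMod n) - 2 ≠ 0 := by
    have h := cast_ne n (k - 2) (by omega) (by omega)
    rwa [Nat.cast_sub (by omega), Nat.cast_ofNat] at h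
  have hckp2 : (k : ZMod n) + 2 ≠ 0 := by
    have h := cast_ne n (k + 2) (by omega) (by omega)
    rwa [Nat.cast_add, Nat.cast_ofNat] at h
  have hc2km1 : 2 * (k : ZMod n) - 1 ≠ 0 := by
    have h := cast_ne n (2 * k - 1) (by omega) (by omega)
    rwa [Nat.cast_sub (by omega), Nat.cast_mul, Nat.cast_ofNat, Nat.cast_one] at h
  have hc2kp1 : 2 * (k : ZMod n) + 1 ≠ 0 := by
    have h := cast_ne n (2 * k + 1) (by omega) (by omega)
    rwa [Nat.cast_add, Nat.cast_mul, Nat.cast_ofNat, Nat.cast_one] at h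
  rw [csl_adj] at hadj
  obtain ⟨-, ha | ha | ha | ha⟩ := hadj
  · -- x = 2
    rcases hx with h | hx
    · exact h
    rw [csl_adj] at hx
    obtain ⟨-, hm | hm | hm | hm⟩ := hx
    · exact absurd (show (1 : ZMod n) = 0 by
        first | linear_combination ha - hm | linear_combination hm - ha
              | linear_combination ha + hm | linear_combination -ha - hm) hc1
    · exact absurd (show (k : ZMod n) - 2 = 0 by
        first | linear_combination ha - hm | linear_combination hm - ha
              | linear_combination ha + hm | linear_combination -ha - hm) hckm2
    · exact absurd (show (3 : ZMod n) = 0 by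
        first | linear_combination ha - hm | linear_combination hm - ha
              | linear_combination ha + hm | linear_combination -ha - hm) hc3
    · exact absurd (show (k : ZMod n) + 2 = 0 by
        first | linear_combination ha - hm | linear_combination hm - ha
              | linear_combination ha + hm | linear_combination -ha - hm) hckp2
  · -- x = 1 + k
    rcases hx with h | hx
    · exact h
    rw [csl_adj] at hx
    obtain ⟨-, hm | hm | hm | hm⟩ := hx
    · exact absurd (show (k : ZMod n) = 0 by
        first | linear_combination ha - hm | linear_combination hm - ha
              | linear_combination ha + hm | linear_combination -ha - hm) hck
    · exact absurd (show (1 : ZMod n) = 0 by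
        first | linear_combination ha - hm | linear_combination hm - ha
              | linear_combination ha + hm | linear_combination -ha - hm) hc1
    · exact absurd (show (k : ZMod n) + 2 = 0 by
        first | linear_combination ha - hm | linear_combination hm - ha
              | linear_combination ha + hm | linear_combination -ha - hm) hckp2
    · exact absurd (show 2 * (k : ZMod n) + 1 = 0 by
        first | linear_combination ha - hm | linear_combination hm - ha
              | linear_combination ha + hm | linear_combination -ha - hm) hc2kp1
  · -- x = 0
    linear_combination -ha
  · -- x = 1 - k
    rcases hx with h | hx
    · exact h
    rw [csl_adj] at hx
    obtain ⟨-, hm | hm | hm | hm⟩ := hx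
    · exact absurd (show (k : ZMod n) = 0 by
        first | linear_combination ha - hm | linear_combination hm - ha
              | linear_combination ha + hm | linear_combination -ha - hm) hck
    · exact absurd (show 2 * (k : ZMod n) - 1 = 0 by
        first | linear_combination ha - hm | linear_combination hm - ha
              | linear_combination ha + hm | linear_combination -ha - hm) hc2km1
    · exact absurd (show (k : ZMod n) - 2 = 0 by
        first | linear_combination ha - hm | linear_combination hm - ha
              | linear_combination ha + hm | linear_combination -ha - hm) hckm2
    · exact absurd (show (1 : ZMod n) = 0 by
        first | linear_combination ha - hm | linear_combination hm - ha
              | linear_combination ha + hm | linear_combination -ha - hm) hc1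

theorem stmt13 (n k : ℕ) (hn : 7 ≤ n) (hk : 3 ≤ k) (hk2 : 2 * k ≤ n - 2) :
    IsEmpty ((CSL n 2).induce {v | v = 0 ∨ (CSL n 2).Adj 0 v} ≃g
             (CSL n k).induce {v | v = 0 ∨ (CSL n k).Adj 0 v}) := by
  constructor
  intro f
  have hc1 : (1 : ZMod n) ≠ 0 := by
    have := cast_ne n 1 (by omega) (by omega); simpa using this
  have mem1 : (1 : ZMod n) ∈ {v : ZMod n | v = 0 ∨ (CSL n k).Adj 0 v} := by
    exact Or.inr (csl_adj.mpr ⟨fun h => hc1 h.symm, Or.inl (by ring)⟩)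
  set w1 : {v : ZMod n | v = 0 ∨ (CSL n k).Adj 0 v} := ⟨1, mem1⟩ with hw1
  set v := f.symm w1 with hv
  obtain ⟨a, b, hma, hmb, hab, hva, hvb⟩ := two_neighbors hn v.1 v.2
  have hva' : ((CSL n 2).induce _).Adj v ⟨a, hma⟩ := hva
  have hvb' : ((CSL n 2).induce _).Adj v ⟨b, hmb⟩ := hvb
  have h1 : ((CSL n k).induce _).Adj (f v) (f ⟨a, hma⟩) := f.map_adj_iff.mpr hva'
  have h2 : ((CSL n k).induce _).Adj (f v) (f ⟨b, hmb⟩) := f.map_adj_iff.mpr hvb'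
  rw [hv, RelIso.apply_symm_apply] at h1 h2
  have e1 : (f ⟨a, hma⟩).1 = 0 := star_center hn hk hk2 _ (f ⟨a, hma⟩).2 h1
  have e2 : (f ⟨b, hmb⟩).1 = 0 := star_center hn hk hk2 _ (f ⟨b, hmb⟩).2 h2
  have : f ⟨a, hma⟩ = f ⟨b, hmb⟩ := Subtype.ext (e1.trans e2.symm)
  exact hab (congrArg Subtype.val (f.injective this))
end

section
/- In the 4×4 Rook's graph, the subgraph induced on the neighborhood of any vertex is a disjoint union of two triangles, whereas in the Shrikhande graph, the subgraph induced on the neighborhood of any vertex is a 6-cycle. Consequently the 4×4 Rook's graph and the Shrikhande graph are not isomorphic. -/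
/-- The 4×4 Rook's graph: `(x,y)` is adjacent to every other vertex in the same row or column. -/
def rook : SimpleGraph (ZMod 4 × ZMod 4) where
  Adj a b := a ≠ b ∧ (a.1 = b.1 ∨ a.2 = b.2)
  symm := ⟨fun _ _ h => ⟨h.1.symm, h.2.imp Eq.symm Eq.symm⟩⟩
  loopless := ⟨fun _ h => h.1 rfl⟩

/-- The Shrikhande graph: `(x,y)` is adjacent to `(x±1,y)`, `(x,y±1)`, `(x±1,y±1)` (mod 4). -/
def shrikhande : SimpleGraph (ZMod 4 × ZMod 4) :=
  SimpleGraph.fromRel (fun a b =>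
    b = a + ((1, 0) : ZMod 4 × ZMod 4) ∨ b = a + ((0, 1) : ZMod 4 × ZMod 4) ∨
    b = a + ((1, 1) : ZMod 4 × ZMod 4))

/-- The 6-cycle. -/
def C6 : SimpleGraph (ZMod 6) := SimpleGraph.fromRel (fun i j => j = i + 1)

/-- Two disjoint triangles. -/
def twoC3 : SimpleGraph (Fin 2 × ZMod 3) :=
  SimpleGraph.fromRel (fun a b => a.1 = b.1 ∧ b.2 = a.2 + 1)

/-!
Both graphs are Cayley graphs on `ZMod 4 × ZMod 4`, so translations act transitively by
automorphisms and every local graph is isomorphic to the one at `0`, which is checked by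
computation. An isomorphism `rook ≃g shrikhande` would restrict to an isomorphism of local graphs,
hence give `twoC3 ≃g C6`; but `twoC3` contains a triangle and `C6` does not.
-/

namespace SimpleGraph

variable {V W : Type*} {G : SimpleGraph V} {G' : SimpleGraph W}

def Iso.induceNeighborSet (φ : G ≃g G') {v : V} {w : W} (hvw : φ v = w) :
    G.induce (G.neighborSet v) ≃g G'.induce (G'.neighborSet w) :=
  φ.induce <| φ.toEquiv.bijOn fun _ => hvw ▸ φ.toEmbedding.apply_mem_neighborSet_iff

def Iso.addRight [AddGroup V] (hG : ∀ a b v : V, G.Adj (a + v) (b + v) ↔ G.Adj a b) (v : V) :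
    G ≃g G :=
  ⟨Equiv.addRight v, hG _ _ v⟩

def induceNeighborSetZeroIso [AddGroup V] (hG : ∀ a b v : V, G.Adj (a + v) (b + v) ↔ G.Adj a b)
    (v : V) : G.induce (G.neighborSet 0) ≃g G.induce (G.neighborSet v) :=
  (Iso.addRight hG v).induceNeighborSet (zero_add v)

lemma cliqueFree_three_iff : G.CliqueFree 3 ↔ ∀ a b c, ¬(G.Adj a b ∧ G.Adj a c ∧ G.Adj b c) := by
  classical
  simp only [CliqueFree, is3Clique_iff]
  grind

end SimpleGraph

open SimpleGraph

instance : DecidableRel rook.Adj := fun a b =>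
  inferInstanceAs (Decidable (a ≠ b ∧ (a.1 = b.1 ∨ a.2 = b.2)))

instance : DecidableRel shrikhande.Adj := fun a b =>
  inferInstanceAs (Decidable (a ≠ b ∧
    ((b = a + ((1, 0) : ZMod 4 × ZMod 4) ∨ b = a + ((0, 1) : ZMod 4 × ZMod 4) ∨
      b = a + ((1, 1) : ZMod 4 × ZMod 4)) ∨
     (a = b + ((1, 0) : ZMod 4 × ZMod 4) ∨ a = b + ((0, 1) : ZMod 4 × ZMod 4) ∨
      a = b + ((1, 1) : ZMod 4 × ZMod 4)))))

instance : DecidableRel C6.Adj := fun a b =>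
  inferInstanceAs (Decidable (a ≠ b ∧ (b = a + 1 ∨ a = b + 1)))

instance : DecidableRel twoC3.Adj := fun a b =>
  inferInstanceAs (Decidable (a ≠ b ∧ ((a.1 = b.1 ∧ b.2 = a.2 + 1) ∨ (b.1 = a.1 ∧ a.2 = b.2 + 1))))

lemma rook_adj_add_right_iff (a b v : ZMod 4 × ZMod 4) :
    rook.Adj (a + v) (b + v) ↔ rook.Adj a b := by
  revert a b v; decide

lemma shrikhande_adj_add_right_iff (a b v : ZMod 4 × ZMod 4) :
    shrikhande.Adj (a + v) (b + v) ↔ shrikhande.Adj a b := by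
  revert a b v; decide

lemma twoC3_not_cliqueFree_three : ¬ twoC3.CliqueFree 3 := by
  rw [cliqueFree_three_iff]; decide

lemma C6_cliqueFree_three : C6.CliqueFree 3 := by
  rw [cliqueFree_three_iff]; decide

def twoC3ToRookNeighbor (p : Fin 2 × ZMod 3) : ZMod 4 × ZMod 4 :=
  if p.1 = 0 then ((p.2.val + 1 : ℕ), 0) else (0, (p.2.val + 1 : ℕ))

lemma twoC3ToRookNeighbor_mem (p : Fin 2 × ZMod 3) :
    twoC3ToRookNeighbor p ∈ rook.neighborSet 0 := by
  revert p; decide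

noncomputable def twoC3IsoRookNeighborZero : twoC3 ≃g rook.induce (rook.neighborSet 0) where
  toEquiv := Equiv.ofBijective (fun p => ⟨_, twoC3ToRookNeighbor_mem p⟩) (by decide)
  map_rel_iff' {p q} := by
    change rook.Adj (twoC3ToRookNeighbor p) (twoC3ToRookNeighbor q) ↔ twoC3.Adj p q
    revert p q; decide

def C6ToShrikhandeNeighbor (i : ZMod 6) : ZMod 4 × ZMod 4 :=
  ![(1, 0), (1, 1), (0, 1), (3, 0), (3, 3), (0, 3)] i

lemma C6ToShrikhandeNeighbor_mem (i : ZMod 6) :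
    C6ToShrikhandeNeighbor i ∈ shrikhande.neighborSet 0 := by
  revert i; decide

noncomputable def C6IsoShrikhandeNeighborZero :
    C6 ≃g shrikhande.induce (shrikhande.neighborSet 0) where
  toEquiv := Equiv.ofBijective (fun i => ⟨_, C6ToShrikhandeNeighbor_mem i⟩) (by decide)
  map_rel_iff' {i j} := by
    change shrikhande.Adj (C6ToShrikhandeNeighbor i) (C6ToShrikhandeNeighbor j) ↔ C6.Adj i j
    revert i j; decide

theorem stmt19 :
    (∀ v, Nonempty (rook.induce (rook.neighborSet v) ≃g twoC3)) ∧
    (∀ v, Nonempty (shrikhande.induce (shrikhande.neighborSet v) ≃g C6)) ∧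
    IsEmpty (rook ≃g shrikhande) := by
  have rook_local (v) : twoC3 ≃g rook.induce (rook.neighborSet v) :=
    twoC3IsoRookNeighborZero.trans (induceNeighborSetZeroIso rook_adj_add_right_iff v)
  have shrikhande_local (v) : C6 ≃g shrikhande.induce (shrikhande.neighborSet v) :=
    C6IsoShrikhandeNeighborZero.trans (induceNeighborSetZeroIso shrikhande_adj_add_right_iff v)
  refine ⟨fun v => ⟨(rook_local v).symm⟩, fun v => ⟨(shrikhande_local v).symm⟩, ⟨fun φ => ?_⟩⟩
  have e : twoC3 ≃g C6 :=
    ((rook_local 0).trans (φ.induceNeighborSet rfl)).trans (shrikhande_local (φ 0)).symm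
  exact twoC3_not_cliqueFree_three (C6_cliqueFree_three.comap e.isContained)
end
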